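/- Let T = (T₁, T₂, T₃) ∈ ℝ³, θ ∈ (0, π/2), and ρ₁ > 0. If |T₁| ≤ ρ₁/2, |T₂| ≤ ρ₁/2, and ρ₁²/(2·sin²θ) ≤ ‖T‖², then ‖T‖·cos θ ≤ T₃ whenever T₃ ≥ 0. In particular the thrust-pointing constraint n̂·T ≥ ‖T‖cos θ holds with n̂ = (0,0,1). -/
import Mathlib

open Real

theorem thrust_pointing_constraint
    (T₁ T₂ T₃ θ ρ₁ : ℝ)
    (hθ0 : 0 < θ) (hθ : θ < π / 2) (hρ₁ : 0 < ρ₁)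
    (hT₁ : |T₁| ≤ ρ₁ / 2) (hT₂ : |T₂| ≤ ρ₁ / 2)
    (hnorm : ρ₁ ^ 2 / (2 * Real.sin θ ^ 2) ≤ T₁ ^ 2 + T₂ ^ 2 + T₃ ^ 2)
    (hT₃ : 0 ≤ T₃) :
    Real.sqrt (T₁ ^ 2 + T₂ ^ 2 + T₃ ^ 2) * Real.cos θ ≤ T₃ := by
  have hs : 0 < Real.sin θ := Real.sin_pos_of_pos_of_lt_pi hθ0 (by linarith [Real.pi_gt_three])
  have hc : 0 ≤ Real.cos θ := Real.cos_nonneg_of_mem_Icc ⟨by linarith, le_of_lt hθ⟩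
  have hsc : Real.sin θ ^ 2 + Real.cos θ ^ 2 = 1 := Real.sin_sq_add_cos_sq θ
  set S := T₁ ^ 2 + T₂ ^ 2 + T₃ ^ 2 with hS
  have hS0 : 0 ≤ S := by positivity
  -- T₁² + T₂² ≤ ρ₁²/2
  have h12 : T₁ ^ 2 + T₂ ^ 2 ≤ ρ₁ ^ 2 / 2 := by
    have h1 : T₁ ^ 2 ≤ (ρ₁ / 2) ^ 2 := sq_le_sq' (by linarith [neg_abs_le T₁, abs_nonneg T₁]) (le_trans (le_abs_self T₁) hT₁)
    have h2 : T₂ ^ 2 ≤ (ρ₁ / 2) ^ 2 := sq_le_sq' (by linarith [neg_abs_le T₂, abs_nonneg T₂]) (le_trans (le_abs_self T₂) hT₂)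
    nlinarith
  -- ρ₁²/2 ≤ sin²θ · S
  have hkey : ρ₁ ^ 2 / 2 ≤ Real.sin θ ^ 2 * S := by
    have h2s : 0 < 2 * Real.sin θ ^ 2 := by positivity
    have := (div_le_iff₀ h2s).mp hnorm
    nlinarith
  have hcs : S * Real.cos θ ^ 2 ≤ T₃ ^ 2 := by nlinarith
  calc Real.sqrt S * Real.cos θ = Real.sqrt (S * Real.cos θ ^ 2) := by
        rw [Real.sqrt_mul hS0, Real.sqrt_sq hc]
    _ ≤ Real.sqrt (T₃ ^ 2) := Real.sqrt_le_sqrt hcs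
    _ = T₃ := Real.sqrt_sq hT₃
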